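/- Let n ≥ 1, let g ∈ ℝ, and let U ⊆ ℝ × ℝⁿ be open. Let v : ℝ × ℝⁿ → ℝⁿ and p : ℝ × ℝⁿ → ℝ be three times continuously differentiable, and suppose that at every point of U the Euler equations hold, ∂_t v_k + Σ_j v_j ∂_j v_k = −∂_k p − g·δ_{kn} for every 1 ≤ k ≤ n, together with Σ_j ∂_j v_j = 0 on U. Define w_k = ∂_t ∂_k p + Σ_j v_j ∂_j ∂_k p for 1 ≤ k ≤ n (the material derivative of the pressure gradient). Then at every point of U: Σ_k ∂_k w_k = 3 Σ_{i,j} ∂_i ∂_j p · ∂_j v_i + 2 Σ_{i,j,k} ∂_i v_j · ∂_j v_k · ∂_k v_i. -/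

import Mathlib

/-! Differentiating the Euler equation and commuting `∂_j` past `D_t = ∂_t + v·∇`, which costs
`[∂_j, D_t] = Σ_m ∂_j v_m ∂_m`, gives `D_t ∂_j v_k = -∂_j∂_k p - Σ_m ∂_j v_m ∂_m v_k`; its trace,
with `div v = 0`, is `Δp = -tr((Dv)²)`. The same commutator gives
`∇·(D_t ∇p) = D_t Δp + tr(D²p·Dv)`, and
`D_t Δp = -2 tr(Dv · D_t Dv) = 2 tr(D²p·Dv) + 2 tr((Dv)³)`. -/

open Set

/-- Time partial derivative of a function on `ℝ × ℝⁿ`. -/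
noncomputable def pdt {n : ℕ} (f : ℝ × (Fin n → ℝ) → ℝ) (q : ℝ × (Fin n → ℝ)) : ℝ :=
  fderiv ℝ f q (1, 0)

/-- Spatial partial derivative in the `i`-th coordinate of a function on `ℝ × ℝⁿ`. -/
noncomputable def pdx {n : ℕ} (i : Fin n) (f : ℝ × (Fin n → ℝ) → ℝ)
    (q : ℝ × (Fin n → ℝ)) : ℝ :=
  fderiv ℝ f q (0, Pi.single i 1)

section Calculus

variable {E F : Type*} [NormedAddCommGroup E] [NormedSpace ℝ E]
  [NormedAddCommGroup F] [NormedSpace ℝ F] {f : E → F} {x : E}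

theorem fderiv_fderiv_apply_const (hf : DifferentiableAt ℝ (fderiv ℝ f) x) (u w : E) :
    fderiv ℝ (fun y => fderiv ℝ f y w) x u = fderiv ℝ (fderiv ℝ f) x u w := by
  simp [fderiv_clm_apply hf (differentiableAt_const w)]

theorem ContDiffAt.differentiableAt_fderiv (hf : ContDiffAt ℝ 2 f x) :
    DifferentiableAt ℝ (fderiv ℝ f) x :=
  (hf.fderiv_right (m := 1) (by norm_num)).differentiableAt one_ne_zero

theorem fderiv_fderiv_apply_field {X : E → E} (hf : ContDiffAt ℝ 2 f x)
    (hX : DifferentiableAt ℝ X x) (u : E) :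
    fderiv ℝ (fun y => fderiv ℝ f y (X y)) x u
      = fderiv ℝ (fun y => fderiv ℝ f y u) x (X x) + fderiv ℝ f x (fderiv ℝ X x u) := by
  have hd := hf.differentiableAt_fderiv
  rw [fderiv_clm_apply hd hX, fderiv_fderiv_apply_const hd,
    ← (hf.isSymmSndFDerivAt (by simp)) u (X x)]
  simp [add_comm]

theorem Set.EqOn.fderiv_eq_of_isOpen {g : E → F} {U : Set E} (h : EqOn f g U) (hU : IsOpen U)
    (hx : x ∈ U) : fderiv ℝ f x = fderiv ℝ g x :=
  (h.eventuallyEq_of_mem (hU.mem_nhds hx)).fderiv_eq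

end Calculus

variable {n : ℕ}

theorem contDiff_pdx {m k : WithTop ℕ∞} {f : ℝ × (Fin n → ℝ) → ℝ} (hf : ContDiff ℝ k f)
    (hmk : m + 1 ≤ k) (i : Fin n) : ContDiff ℝ m (pdx i f) :=
  (hf.fderiv_right hmk).clm_apply contDiff_const

theorem ContinuousLinearMap.apply_zero_prod_eq_sum {F : Type*} [AddCommGroup F] [Module ℝ F]
    [TopologicalSpace F] (L : ℝ × (Fin n → ℝ) →L[ℝ] F) (w : Fin n → ℝ) :
    L (0, w) = ∑ j, w j • L (0, Pi.single j 1) := by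
  simp_rw [← map_smul, ← map_sum, Prod.smul_mk, smul_zero]
  congr 1
  ext <;> simp [Prod.fst_sum, Prod.snd_sum, Pi.single_apply]

noncomputable def materialDeriv (v : ℝ × (Fin n → ℝ) → Fin n → ℝ) (f : ℝ × (Fin n → ℝ) → ℝ)
    (q : ℝ × (Fin n → ℝ)) : ℝ :=
  fderiv ℝ f q (1, v q)

theorem materialDeriv_eq (v : ℝ × (Fin n → ℝ) → Fin n → ℝ) (f : ℝ × (Fin n → ℝ) → ℝ)
    (q : ℝ × (Fin n → ℝ)) : materialDeriv v f q = pdt f q + ∑ j, v q j * pdx j f q := by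
  rw [materialDeriv, show ((1 : ℝ), v q) = (1, 0) + (0, v q) by simp, map_add,
    ContinuousLinearMap.apply_zero_prod_eq_sum]
  rfl

section MaterialDerivative

variable {v : ℝ × (Fin n → ℝ) → Fin n → ℝ} {f g : ℝ × (Fin n → ℝ) → ℝ} {q : ℝ × (Fin n → ℝ)}

theorem pdx_materialDeriv (hf : ContDiffAt ℝ 2 f q) (hv : DifferentiableAt ℝ v q) (k : Fin n) :
    pdx k (materialDeriv v f) q
      = materialDeriv v (pdx k f) q + ∑ j, pdx k (fun r => v r j) q * pdx j f q := by
  have hX : DifferentiableAt ℝ (fun r => ((1 : ℝ), v r)) q :=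
    (differentiableAt_const _).prodMk hv
  refine (fderiv_fderiv_apply_field hf hX _).trans ?_
  rw [(differentiableAt_const _).fderiv_prodMk hv]
  simp only [ContinuousLinearMap.prod_apply, fderiv_const_apply, zero_apply]
  rw [ContinuousLinearMap.apply_zero_prod_eq_sum]
  simp only [smul_eq_mul, pdx, fderiv_apply hv]
  rfl

theorem materialDeriv_mul (hf : DifferentiableAt ℝ f q) (hg : DifferentiableAt ℝ g q) :
    materialDeriv v (fun r => f r * g r) q
      = f q * materialDeriv v g q + g q * materialDeriv v f q := by
  simp [materialDeriv, fderiv_fun_mul hf hg]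

theorem materialDeriv_neg : materialDeriv v (fun r => -f r) q = -materialDeriv v f q := by
  simp [materialDeriv, fderiv_fun_neg]

theorem materialDeriv_sum {ι : Type*} {s : Finset ι} {F : ι → ℝ × (Fin n → ℝ) → ℝ}
    (hF : ∀ i ∈ s, DifferentiableAt ℝ (F i) q) :
    materialDeriv v (fun r => ∑ i ∈ s, F i r) q = ∑ i ∈ s, materialDeriv v (F i) q := by
  simp [materialDeriv, fderiv_fun_sum hF]

end MaterialDerivative

theorem differentiable_pdx {f : ℝ × (Fin n → ℝ) → ℝ} (hf : ContDiff ℝ 2 f) (i : Fin n) :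
    Differentiable ℝ (pdx i f) :=
  (contDiff_pdx (m := 1) hf (by norm_num) i).differentiable one_ne_zero

theorem trace_identity_of_riccati (H a : Fin n → Fin n → ℝ) :
    -∑ k, ∑ j, (a k j * (-H j k - ∑ m, a j m * a m k) + a j k * (-H k j - ∑ m, a k m * a m j))
      + ∑ k, ∑ j, a k j * H j k
      = 3 * ∑ i, ∑ j, H i j * a j i + 2 * ∑ i, ∑ j, ∑ k, a i j * a j k * a k i := by
  have hquad : ∑ k, ∑ j, a j k * H k j = ∑ i, ∑ j, H i j * a j i := by
    simp only [mul_comm]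
  have hcube : ∑ k, ∑ j, a k j * ∑ m, a j m * a m k = ∑ i, ∑ j, ∑ k, a i j * a j k * a k i := by
    simp only [Finset.mul_sum, mul_assoc]
  have hquad' : ∑ k, ∑ j, a k j * H j k = ∑ i, ∑ j, H i j * a j i :=
    Finset.sum_comm.trans hquad
  have hcube' : ∑ k, ∑ j, a j k * ∑ m, a k m * a m j = ∑ i, ∑ j, ∑ k, a i j * a j k * a k i :=
    Finset.sum_comm.trans hcube
  simp only [mul_sub, mul_neg, Finset.sum_add_distrib, Finset.sum_sub_distrib,
    Finset.sum_neg_distrib]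
  linarith

section EulerFlow

variable {U : Set (ℝ × (Fin n → ℝ))} {v : ℝ × (Fin n → ℝ) → Fin n → ℝ}
  {p : ℝ × (Fin n → ℝ) → ℝ} {c : Fin n → ℝ} {q : ℝ × (Fin n → ℝ)}

theorem materialDeriv_pdx_velocity (hU : IsOpen U) (hv : ContDiff ℝ 2 v)
    (heuler : ∀ r ∈ U, ∀ k, materialDeriv v (fun r => v r k) r = -pdx k p r - c k)
    (hq : q ∈ U) (j k : Fin n) :
    materialDeriv v (pdx j (fun r => v r k)) q
      = -pdx j (pdx k p) q - ∑ m, pdx j (fun r => v r m) q * pdx m (fun r => v r k) q := by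
  have hcomm := pdx_materialDeriv (contDiff_pi.mp hv k).contDiffAt
    (hv.differentiable two_ne_zero q) j
  have hgrad : pdx j (materialDeriv v (fun r => v r k)) q = -pdx j (pdx k p) q := by
    rw [pdx, EqOn.fderiv_eq_of_isOpen (g := fun r => -pdx k p r - c k)
      (fun r hr => heuler r hr k) hU hq, fderiv_sub_const, fderiv_fun_neg]
    rfl
  linarith

theorem sum_pdx_pdx_pressure (hU : IsOpen U) (hv : ContDiff ℝ 2 v)
    (heuler : ∀ r ∈ U, ∀ k, materialDeriv v (fun r => v r k) r = -pdx k p r - c k)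
    (hdiv : ∀ r ∈ U, ∑ j, pdx j (fun r => v r j) r = 0) (hq : q ∈ U) :
    ∑ k, pdx k (pdx k p) q = -∑ k, ∑ j, pdx k (fun r => v r j) q * pdx j (fun r => v r k) q := by
  have hzero : materialDeriv v (fun r => ∑ k, pdx k (fun r => v r k) r) q = 0 := by
    rw [materialDeriv, EqOn.fderiv_eq_of_isOpen (g := fun _ => 0) (fun r hr => hdiv r hr) hU hq]
    simp
  rw [materialDeriv_sum fun k _ => differentiable_pdx (contDiff_pi.mp hv k) k q] at hzero
  simp only [materialDeriv_pdx_velocity hU hv heuler hq, Finset.sum_sub_distrib,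
    Finset.sum_neg_distrib] at hzero
  linarith

theorem sum_pdx_materialDeriv_pdx_pressure (hU : IsOpen U) (hv : ContDiff ℝ 2 v)
    (hp : ContDiff ℝ 3 p)
    (heuler : ∀ r ∈ U, ∀ k, materialDeriv v (fun r => v r k) r = -pdx k p r - c k)
    (hdiv : ∀ r ∈ U, ∑ j, pdx j (fun r => v r j) r = 0) (hq : q ∈ U) :
    ∑ k, pdx k (materialDeriv v (pdx k p)) q
      = 3 * ∑ i, ∑ j, pdx i (pdx j p) q * pdx j (fun r => v r i) q
        + 2 * ∑ i, ∑ j, ∑ k, pdx i (fun r => v r j) q * pdx j (fun r => v r k) q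
            * pdx k (fun r => v r i) q := by
  have ha (i j : Fin n) : Differentiable ℝ (pdx i (fun r => v r j)) :=
    differentiable_pdx (contDiff_pi.mp hv j) i
  have hcomm (k : Fin n) := pdx_materialDeriv (contDiff_pdx (m := 2) hp (by norm_num) k).contDiffAt
    (hv.differentiable two_ne_zero q) k
  have hlap : ∑ k, materialDeriv v (pdx k (pdx k p)) q
      = -∑ k, ∑ j, (pdx k (fun r => v r j) q * materialDeriv v (pdx j (fun r => v r k)) q
          + pdx j (fun r => v r k) q * materialDeriv v (pdx k (fun r => v r j)) q) := by
    have hpoisson : materialDeriv v (fun r => ∑ k, pdx k (pdx k p) r) q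
        = materialDeriv v
            (fun r => -∑ k, ∑ j, pdx k (fun r => v r j) r * pdx j (fun r => v r k) r) q := by
      rw [materialDeriv, materialDeriv, EqOn.fderiv_eq_of_isOpen
        (fun r hr => sum_pdx_pdx_pressure hU hv heuler hdiv hr) hU hq]
    have hterm (k : Fin n) :
        materialDeriv v (fun r => ∑ j, pdx k (fun r => v r j) r * pdx j (fun r => v r k) r) q
          = ∑ j, (pdx k (fun r => v r j) q * materialDeriv v (pdx j (fun r => v r k)) q
              + pdx j (fun r => v r k) q * materialDeriv v (pdx k (fun r => v r j)) q) := by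
      rw [materialDeriv_sum fun j _ => ((ha k j).fun_mul (ha j k)) q]
      exact Finset.sum_congr rfl fun j _ => materialDeriv_mul (ha k j q) (ha j k q)
    rwa [materialDeriv_sum fun k _ => differentiable_pdx (contDiff_pdx hp (by norm_num) k) k q,
      materialDeriv_neg, materialDeriv_sum fun k _ =>
        DifferentiableAt.fun_sum fun j _ => ((ha k j).fun_mul (ha j k)) q,
      Finset.sum_congr rfl fun k _ => hterm k] at hpoisson
  rw [Finset.sum_congr rfl fun k _ => hcomm k, Finset.sum_add_distrib, hlap]
  simp only [materialDeriv_pdx_velocity hU hv heuler hq]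
  exact trace_identity_of_riccati _ _

end EulerFlow

theorem div_material_derivative_pressure_gradient_general {n : ℕ} (g : ℝ)
    (U : Set (ℝ × (Fin n → ℝ))) (hU : IsOpen U)
    (v : ℝ × (Fin n → ℝ) → Fin n → ℝ) (p : ℝ × (Fin n → ℝ) → ℝ)
    (hv : ContDiff ℝ 3 v) (hp : ContDiff ℝ 3 p)
    (heuler : ∀ q ∈ U, ∀ k : Fin n,
      pdt (fun r => v r k) q + ∑ j, v q j * pdx j (fun r => v r k) q
        = -pdx k p q - (if (k : ℕ) = n - 1 then g else 0))
    (hdiv : ∀ q ∈ U, ∑ j, pdx j (fun r => v r j) q = 0) :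
    ∀ q ∈ U,
      ∑ k, pdx k (fun r => pdt (pdx k p) r + ∑ j, v r j * pdx j (pdx k p) r) q
        = 3 * ∑ i, ∑ j, pdx i (pdx j p) q * pdx j (fun r => v r i) q
          + 2 * ∑ i, ∑ j, ∑ k, pdx i (fun r => v r j) q * pdx j (fun r => v r k) q
              * pdx k (fun r => v r i) q := by
  intro q hq
  simp only [← materialDeriv_eq] at heuler ⊢
  exact sum_pdx_materialDeriv_pdx_pressure hU (hv.of_le (by norm_num)) hp heuler hdiv hq

/-- Divergence of the material derivative of the pressure gradient of an incompressible
Euler flow: `∇·(D_t ∇p) = 3 tr(D²p·Dv) + 2 tr((Dv)³)`. -/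
theorem div_material_derivative_pressure_gradient {n : ℕ} (hn : 1 ≤ n) (g : ℝ)
    (U : Set (ℝ × (Fin n → ℝ))) (hU : IsOpen U)
    (v : ℝ × (Fin n → ℝ) → Fin n → ℝ) (p : ℝ × (Fin n → ℝ) → ℝ)
    (hv : ContDiff ℝ 3 v) (hp : ContDiff ℝ 3 p)
    (heuler : ∀ q ∈ U, ∀ k : Fin n,
      pdt (fun r => v r k) q + ∑ j, v q j * pdx j (fun r => v r k) q
        = -pdx k p q - (if (k : ℕ) = n - 1 then g else 0))
    (hdiv : ∀ q ∈ U, ∑ j, pdx j (fun r => v r j) q = 0) :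
    ∀ q ∈ U,
      ∑ k, pdx k (fun r => pdt (pdx k p) r + ∑ j, v r j * pdx j (pdx k p) r) q
        = 3 * ∑ i, ∑ j, pdx i (pdx j p) q * pdx j (fun r => v r i) q
          + 2 * ∑ i, ∑ j, ∑ k, pdx i (fun r => v r j) q * pdx j (fun r => v r k) q
              * pdx k (fun r => v r i) q :=
  div_material_derivative_pressure_gradient_general g U hU v p hv hp heuler hdiv
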